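/- arXiv:1505.00125 — 2 statements merged into one kernel-verified Lean document; each statement's English description precedes it below -/
import Mathlib

section
/- (Forward direction of Lemma 2.3.6 of Breuil–Herzig, as Lemma 3.3 of the paper.) Let d ≥ 1, let C ⊆ R⁺ = {(i,j) : 1 ≤ i < j ≤ d} be a closed subset, and let S be a commutative ring. Suppose σ ∈ S_d is a permutation belonging to W_C, i.e. σ⁻¹(i) < σ⁻¹(j) for every (i,j) ∈ C. Then for every matrix A ∈ B_C(S), the conjugate w_σ⁻¹ · A · w_σ is an upper triangular matrix. -/
/-- A subset `C` of the positive roots `R⁺ = {(i,j) : i < j}` of `GL_d` is *closed* if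
`(i,j) ∈ C` and `(j,k) ∈ C` imply `(i,k) ∈ C`. -/
def IsClosedRootSubset {d : ℕ} (C : Set (Fin d × Fin d)) : Prop :=
  (∀ p ∈ C, p.1 < p.2) ∧
    ∀ i j k : Fin d, (i, j) ∈ C → (j, k) ∈ C → (i, k) ∈ C

/-- Membership in `B_C(S)`: a `d × d` matrix over `S` whose diagonal entries are units
and whose off-diagonal `(i,j)`-entries vanish whenever `(i,j) ∉ C`. -/
def MemBC {d : ℕ} {S : Type*} [CommRing S] (C : Set (Fin d × Fin d))
    (A : Matrix (Fin d) (Fin d) S) : Prop :=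
  (∀ i : Fin d, IsUnit (A i i)) ∧
    ∀ i j : Fin d, i ≠ j → (i, j) ∉ C → A i j = 0

/-- The permutation matrix `w_σ` with entries `(w_σ)_{ij} = δ_{i, σ(j)}`. -/
def permMat {d : ℕ} (S : Type*) [CommRing S] (σ : Equiv.Perm (Fin d)) :
    Matrix (Fin d) (Fin d) S :=
  Matrix.of fun i j => if i = σ j then 1 else 0

/-! The conjugate `w_σ⁻¹ A w_σ` is `A` with rows and columns reindexed by `σ`; the support
condition of `B_C` together with `σ ∈ W_C` makes `A` block triangular for the order pulled
back along `σ⁻¹`, and reindexing by `σ` turns that order into the standard one. -/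

section PermMat

variable {d : ℕ} (S : Type*) [CommRing S] (σ : Equiv.Perm (Fin d))

theorem permMat_eq_permMatrix : permMat S σ = σ⁻¹.permMatrix S := by
  ext i j
  simp [permMat, Equiv.toPEquiv_apply, Equiv.eq_symm_apply, eq_comm]

theorem inv_permMat : (permMat S σ)⁻¹ = permMat S σ⁻¹ :=
  Matrix.inv_eq_left_inv <| by
    rw [permMat_eq_permMatrix, permMat_eq_permMatrix, ← Matrix.permMatrix_mul, inv_inv,
      inv_mul_cancel, Matrix.permMatrix_one]

theorem inv_permMat_mul_mul_permMat (A : Matrix (Fin d) (Fin d) S) :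
    (permMat S σ)⁻¹ * A * permMat S σ = A.submatrix σ σ := by
  rw [inv_permMat, permMat_eq_permMatrix, permMat_eq_permMatrix, inv_inv,
    PEquiv.toMatrix_toPEquiv_mul, PEquiv.mul_toMatrix_toPEquiv, Matrix.submatrix_submatrix]
  rfl

end PermMat

theorem MemBC.blockTriangular {d : ℕ} {S : Type*} [CommRing S] {C : Set (Fin d × Fin d)}
    {A : Matrix (Fin d) (Fin d) S} (hA : MemBC C A) {α : Type*} [Preorder α] {b : Fin d → α}
    (hb : ∀ p ∈ C, b p.1 < b p.2) : A.BlockTriangular b :=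
  fun i j hji => hA.2 i j (fun hij => (hij ▸ hji).false) fun hij => (hb _ hij).asymm hji

theorem conj_BC_upperTriangular_general {d : ℕ} (C : Set (Fin d × Fin d))
    (S : Type*) [CommRing S]
    (σ : Equiv.Perm (Fin d)) (hσ : ∀ p ∈ C, σ⁻¹ p.1 < σ⁻¹ p.2)
    (A : Matrix (Fin d) (Fin d) S) (hA : MemBC C A) :
    ∀ i j : Fin d, j < i → ((permMat S σ)⁻¹ * A * permMat S σ) i j = 0 := by
  rw [inv_permMat_mul_mul_permMat]
  intro i j hji
  exact (hA.blockTriangular hσ).submatrix (by simpa using hji)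

/-- forward direction of Breuil–Herzig, Lem. 2.3.6: if `σ ∈ W_C`,
i.e. `σ⁻¹(i) < σ⁻¹(j)` for all `(i,j) ∈ C`, then for every `A ∈ B_C(S)` the conjugate
`w_σ⁻¹ · A · w_σ` is upper triangular. -/
theorem conj_BC_upperTriangular {d : ℕ} (hd : 1 ≤ d) (C : Set (Fin d × Fin d))
    (hC : IsClosedRootSubset C) (S : Type*) [CommRing S]
    (σ : Equiv.Perm (Fin d)) (hσ : ∀ p ∈ C, σ⁻¹ p.1 < σ⁻¹ p.2)
    (A : Matrix (Fin d) (Fin d) S) (hA : MemBC C A) :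
    ∀ i j : Fin d, j < i → ((permMat S σ)⁻¹ * A * permMat S σ) i j = 0 :=
  conj_BC_upperTriangular_general C S σ hσ A hA
end

section
/- (Converse direction of Lemma 2.3.6 of Breuil–Herzig, as Lemma 3.3 of the paper.) Let d ≥ 1, let C ⊆ R⁺ = {(i,j) : 1 ≤ i < j ≤ d} be a closed subset, and let S be a nontrivial commutative ring (1 ≠ 0 in S). Suppose σ ∈ S_d is a permutation such that for every matrix A ∈ B_C(S) the conjugate w_σ⁻¹ · A · w_σ is upper triangular. Then σ ∈ W_C, i.e. σ⁻¹(i) < σ⁻¹(j) for every (i,j) ∈ C. -/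
lemma permMat_mul_permMat_inv {d : ℕ} (S : Type*) [CommRing S] (σ : Equiv.Perm (Fin d)) :
    permMat S σ⁻¹ * permMat S σ = 1 := by
  ext a b
  simp only [permMat, Matrix.mul_apply, Matrix.of_apply, ite_mul, one_mul, zero_mul,
    Matrix.one_apply]
  have h : ∀ x, (a = σ⁻¹ x) = (x = σ a) := fun x =>
    by rw [eq_iff_iff]; constructor <;> rintro rfl <;> simp
  simp_rw [h]
  rw [Finset.sum_ite_eq' Finset.univ (σ a)]
  simp

lemma permMat_inv {d : ℕ} (S : Type*) [CommRing S] (σ : Equiv.Perm (Fin d)) :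
    (permMat S σ)⁻¹ = permMat S σ⁻¹ :=
  Matrix.inv_eq_left_inv (permMat_mul_permMat_inv S σ)

lemma conj_entry {d : ℕ} (S : Type*) [CommRing S] (σ : Equiv.Perm (Fin d))
    (A : Matrix (Fin d) (Fin d) S) (a b : Fin d) :
    ((permMat S σ)⁻¹ * A * permMat S σ) a b = A (σ a) (σ b) := by
  rw [permMat_inv]
  simp only [permMat, Matrix.mul_apply, Matrix.of_apply, mul_ite, mul_one, mul_zero]
  rw [Finset.sum_ite_eq' Finset.univ (σ b)]
  simp only [Finset.mem_univ, if_true, ite_mul, one_mul, zero_mul]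
  have h : ∀ k, (a = σ⁻¹ k) = (k = σ a) := fun k =>
    by rw [eq_iff_iff]; constructor <;> rintro rfl <;> simp
  simp_rw [h]
  rw [Finset.sum_ite_eq' Finset.univ (σ a)]
  simp

/-- converse direction of Breuil–Herzig, Lem. 2.3.6: over a nontrivial
commutative ring `S`, if `σ` is a permutation such that `w_σ⁻¹ · A · w_σ` is upper
triangular for every `A ∈ B_C(S)`, then `σ ∈ W_C`, i.e. `σ⁻¹(i) < σ⁻¹(j)` for all
`(i,j) ∈ C`. -/
theorem mem_WC_of_conj_upperTriangular {d : ℕ} (hd : 1 ≤ d)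
    (C : Set (Fin d × Fin d)) (hC : IsClosedRootSubset C)
    (S : Type*) [CommRing S] [Nontrivial S] (σ : Equiv.Perm (Fin d))
    (hσ : ∀ A : Matrix (Fin d) (Fin d) S, MemBC C A →
      ∀ i j : Fin d, j < i → ((permMat S σ)⁻¹ * A * permMat S σ) i j = 0) :
    ∀ p ∈ C, σ⁻¹ p.1 < σ⁻¹ p.2 := by
  rintro ⟨i, j⟩ hij
  have hlt : i < j := hC.1 _ hij
  by_contra hcon
  push_neg at hcon
  have hne : σ⁻¹ j ≠ σ⁻¹ i := by
    intro h
    exact absurd (σ⁻¹.injective h) hlt.ne'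
  have hlt' : σ⁻¹ j < σ⁻¹ i := lt_of_le_of_ne hcon hne
  set A : Matrix (Fin d) (Fin d) S := 1 + Matrix.single i j 1 with hA
  have hmem : MemBC C A := by
    constructor
    · intro k
      have : A k k = 1 := by
        simp [hA, Matrix.single, Matrix.one_apply]
        intro h h'
        exact absurd (h.trans h'.symm) hlt.ne
      rw [this]; exact isUnit_one
    · intro k l hkl hnC
      have : ¬ (i = k ∧ j = l) := by
        rintro ⟨rfl, rfl⟩; exact hnC hij
      simp [hA, Matrix.single, Matrix.one_apply, hkl, this]
  have := hσ A hmem (σ⁻¹ i) (σ⁻¹ j) hlt'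
  rw [conj_entry] at this
  simp [hA, Matrix.single, Matrix.one_apply, hne, hlt.ne] at this
end
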